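/- arXiv:1704.00987 — 2 statements merged into one kernel-verified Lean document; each statement's English description precedes it below -/
import Mathlib

section
/- Let R be a G-graded ring and ℏ a homogeneous regular normal non-invertible element such that R is ℏ-discrete: for every γ ∈ G there exists n ≥ 0 with (ℏ^n R)_γ = 0. Then R is left G-noetherian (every homogeneous left ideal is finitely generated) if and only if R̄ = R/ℏR is left G-noetherian. -/
/-!
Let `R` be a `G`-graded ring and `ℏ` a homogeneous regular normal non-invertible element
such that `R` is `ℏ`-discrete.  Then `R` is left `G`-noetherian (every homogeneous left
ideal is finitely generated) iff `R̄ = R/ℏR` is left `G`-noetherian.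
Here `R/ℏR` is realized as the quotient of `R` by the ring congruence generated by
`x ~ y ↔ x - y ∈ Rℏ`, with the induced `G`-grading.
-/

/-- A left ideal of a ring equipped with a family of additive subgroups (a grading) is
*homogeneous* if it is generated by its homogeneous elements. -/
def IsHomogeneousLeftIdeal {ι S : Type*} [Ring S] (ℬ : ι → AddSubgroup S)
    (I : Ideal S) : Prop :=
  I = Ideal.span {x : S | x ∈ I ∧ ∃ γ : ι, x ∈ ℬ γ}

/-- A graded ring (given by a family of additive subgroups) is left `G`-noetherian if
every homogeneous left ideal is finitely generated. -/
def IsLeftGradedNoetherian {ι S : Type*} [Ring S] (ℬ : ι → AddSubgroup S) : Prop :=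
  ∀ I : Ideal S, IsHomogeneousLeftIdeal ℬ I → I.FG

/-!
Homogeneous left ideals of `R̄` lift to homogeneous left ideals of `R`, which gives one direction.
Conversely, for a homogeneous left ideal `I` of `R` consider the colon ideals
`L k = {x | ℏ ^ k x ∈ I}`; their images in `R̄` form an ascending chain of homogeneous left ideals,
so they stabilise at some `N` and each is generated by the images of finitely many homogeneous
`t ∈ L m`. The finitely many `ℏ ^ m t` with `m ≤ N` generate a left ideal `K ≤ I`, and every
homogeneous `y ∈ L k` can be written `y = z + ℏ t` with `ℏ ^ k z ∈ K` and `t ∈ L (k + 1)`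
homogeneous. Iterating pushes `ℏ ^ k y` into `ℏ ^ (k + j) R` in a fixed degree, which vanishes for
large `j` by `ℏ`-discreteness, so `I = K`.
-/

open DirectSum SetLike

section Grading

variable {ι R S : Type*} [Ring R] [Ring S] {𝒜 : ι → AddSubgroup R} {ℬ : ι → AddSubgroup S}

theorem isHomogeneousLeftIdeal_span (s : Set S) (h : ∀ x ∈ s, ∃ γ, x ∈ ℬ γ) :
    IsHomogeneousLeftIdeal ℬ (Ideal.span s) :=
  le_antisymm (Ideal.span_mono fun x hx => ⟨Ideal.subset_span hx, h x hx⟩)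
    (Ideal.span_le.mpr fun _ hx => hx.1)

theorem isHomogeneousLeftIdeal_iSup {κ : Type*} {J : κ → Ideal S}
    (hJ : ∀ i, IsHomogeneousLeftIdeal ℬ (J i)) : IsHomogeneousLeftIdeal ℬ (⨆ i, J i) := by
  have hsup : (⨆ i, J i) = Ideal.span (⋃ i, {x | x ∈ J i ∧ ∃ γ, x ∈ ℬ γ}) := by
    rw [Ideal.span_iUnion]
    exact iSup_congr hJ
  rw [hsup]
  refine isHomogeneousLeftIdeal_span _ fun x hx => ?_
  obtain ⟨i, -, hxγ⟩ := Set.mem_iUnion.mp hx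
  exact hxγ

theorem IsLeftGradedNoetherian.exists_le_min (hℬ : IsLeftGradedNoetherian ℬ) {J : ℕ → Ideal S}
    (hmono : Monotone J) (hJ : ∀ n, IsHomogeneousLeftIdeal ℬ (J n)) :
    ∃ N, ∀ k, J k ≤ J (min k N) := by
  have hcompact := (Submodule.fg_iff_compact _).mp (hℬ _ (isHomogeneousLeftIdeal_iSup hJ))
  obtain ⟨s, hs⟩ := CompleteLattice.IsCompactElement.exists_finset_of_le_iSup _ hcompact J le_rfl
  refine ⟨s.sup id, fun k => ?_⟩
  rcases le_total k (s.sup id) with hk | hk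
  · rw [min_eq_left hk]
  · rw [min_eq_right hk]
    exact (le_iSup J k).trans
      (hs.trans (iSup₂_le fun i hi => hmono (Finset.le_sup (f := id) hi)))

theorem IsHomogeneousLeftIdeal.map_eq_span {I : Ideal R} (hI : IsHomogeneousLeftIdeal 𝒜 I)
    (f : R →+* S) : I.map f = Ideal.span (f '' {x | x ∈ I ∧ ∃ γ, x ∈ 𝒜 γ}) := by
  rw [← Ideal.map_span, ← hI]

theorem IsHomogeneousLeftIdeal.map {I : Ideal R} (hI : IsHomogeneousLeftIdeal 𝒜 I) (f : R →+* S)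
    (hℬ : ∀ γ, ℬ γ = (𝒜 γ).map f.toAddMonoidHom) : IsHomogeneousLeftIdeal ℬ (I.map f) := by
  rw [hI.map_eq_span f]
  refine isHomogeneousLeftIdeal_span _ ?_
  rintro _ ⟨x, ⟨-, γ, hx⟩, rfl⟩
  exact ⟨γ, hℬ γ ▸ ⟨x, hx, rfl⟩⟩

theorem IsLeftGradedNoetherian.map (h𝒜 : IsLeftGradedNoetherian 𝒜) (f : R →+* S)
    (hℬ : ∀ γ, ℬ γ = (𝒜 γ).map f.toAddMonoidHom) : IsLeftGradedNoetherian ℬ := by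
  intro J hJ
  set s : Set R := {x | f x ∈ J ∧ ∃ γ, x ∈ 𝒜 γ}
  have hJs : J = (Ideal.span s).map f := by
    rw [Ideal.map_span]
    refine le_antisymm ?_ (Ideal.span_le.mpr fun _ ⟨x, hx, hxy⟩ => hxy ▸ hx.1)
    conv_lhs => rw [hJ]
    refine Ideal.span_mono ?_
    rintro y ⟨hy, γ, hyγ⟩
    rw [hℬ] at hyγ
    obtain ⟨x, hx, rfl⟩ := hyγ
    exact ⟨x, ⟨hy, γ, hx⟩, rfl⟩
  rw [hJs]
  exact (h𝒜 _ (isHomogeneousLeftIdeal_span s fun x hx => hx.2)).map f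

end Grading

theorem Ideal.exists_finite_subset_span_image_eq {R S : Type*} [Ring S] (f : R → S) (s : Set R)
    (h : (Ideal.span (f '' s)).FG) :
    ∃ t ⊆ s, t.Finite ∧ Ideal.span (f '' s) = Ideal.span (f '' t) := by
  obtain ⟨u, hus, hu⟩ := (Submodule.fg_span_iff_fg_span_finset_subset _).mp h
  exact Set.exists_subset_image_finite_and (p := fun v => Ideal.span (f '' s) = Ideal.span v)
    |>.mp ⟨u, hus, u.finite_toSet, hu⟩

section GradedRing

variable {G R : Type*} [AddCommGroup G] [DecidableEq G] [Ring R] {𝒜 : G → AddSubgroup R}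
  [GradedRing 𝒜]

theorem isHomogeneousLeftIdeal_iff_isHomogeneous (I : Ideal R) :
    IsHomogeneousLeftIdeal 𝒜 I ↔ I.IsHomogeneous 𝒜 := by
  refine ⟨fun h => h ▸ Ideal.homogeneous_span 𝒜 _ fun x hx => hx.2, fun h => ?_⟩
  refine le_antisymm (fun x hx => ?_) (Ideal.span_le.mpr fun _ hx => hx.1)
  classical
  rw [← sum_support_decompose 𝒜 x]
  exact Ideal.sum_mem _ fun γ _ => Ideal.subset_span ⟨h γ hx, γ, SetLike.coe_mem _⟩

theorem Ideal.IsHomogeneous.exists_eq_add_mul {P : Ideal R} (hP : P.IsHomogeneous 𝒜) {ℏ : R}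
    {ε δ : G} (hhom : ℏ ∈ 𝒜 ε) {y z t : R} (hy : y ∈ 𝒜 δ) (hz : z ∈ P) (h : y = z + ℏ * t) :
    ∃ z' ∈ P, ∃ t' ∈ 𝒜 (δ - ε), y = z' + ℏ * t' := by
  refine ⟨decompose 𝒜 z δ, hP δ hz, decompose 𝒜 t (δ - ε), SetLike.coe_mem _, ?_⟩
  have hδ := congrArg (fun w => (decompose 𝒜 w δ : R)) h
  simp only [decompose_add, DirectSum.add_apply, AddSubgroup.coe_add,
    decompose_of_mem_same 𝒜 hy] at hδ
  rwa [← coe_decompose_mul_add_of_left_mem 𝒜 hhom, add_sub_cancel]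

end GradedRing

section NormalElement

variable {R : Type*} [Ring R] {ℏ : R}

theorem exists_mul_eq_mul_left_of_range_eq
    (hnormal : Set.range (fun r => ℏ * r) = Set.range (fun r => r * ℏ)) (a : R) :
    ∃ b, a * ℏ = ℏ * b := by
  obtain ⟨b, hb⟩ : a * ℏ ∈ Set.range (fun r => ℏ * r) := hnormal ▸ ⟨a, rfl⟩
  exact ⟨b, hb.symm⟩

theorem exists_pow_mul_eq_mul_pow_of_range_eq
    (hnormal : Set.range (fun r => ℏ * r) = Set.range (fun r => r * ℏ)) (n : ℕ) (a : R) :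
    ∃ b, ℏ ^ n * a = b * ℏ ^ n := by
  induction n generalizing a with
  | zero => exact ⟨a, by simp⟩
  | succ n ih =>
    obtain ⟨b, hb⟩ : ℏ * a ∈ Set.range (fun r => r * ℏ) := hnormal ▸ ⟨a, rfl⟩
    obtain ⟨c, hc⟩ := ih b
    exact ⟨c, by rw [pow_succ, mul_assoc, ← hb, ← mul_assoc, hc, mul_assoc]⟩

theorem Ideal.isTwoSided_span_singleton_of_range_eq
    (hnormal : Set.range (fun r => ℏ * r) = Set.range (fun r => r * ℏ)) :
    (Ideal.span {ℏ}).IsTwoSided := by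
  refine ⟨fun b ha => ?_⟩
  obtain ⟨a, rfl⟩ := Ideal.mem_span_singleton'.mp ha
  obtain ⟨c, hc⟩ := exists_pow_mul_eq_mul_pow_of_range_eq hnormal 1 b
  rw [pow_one] at hc
  exact Ideal.mem_span_singleton'.mpr ⟨a * c, by rw [mul_assoc a ℏ b, hc, ← mul_assoc]⟩

theorem ker_mk'_ringConGen_of_range_eq
    (hnormal : Set.range (fun r => ℏ * r) = Set.range (fun r => r * ℏ)) :
    RingHom.ker (RingCon.mk' (ringConGen fun x y : R => ∃ r, x - y = r * ℏ)) =
      Ideal.span {ℏ} := by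
  have := Ideal.isTwoSided_span_singleton_of_range_eq hnormal
  have hle : ringConGen (fun x y : R => ∃ r, x - y = r * ℏ) ≤
      (Ideal.span {ℏ}).toTwoSided.ringCon :=
    RingCon.ringConGen_le.mpr fun x y ⟨r, hr⟩ => by
      rw [TwoSidedIdeal.rel_iff, Ideal.mem_toTwoSided, hr]
      exact Ideal.mem_span_singleton'.mpr ⟨r, rfl⟩
  ext x
  rw [RingHom.mem_ker, RingCon.coe_mk', ← RingCon.coe_zero, RingCon.eq]
  constructor
  · intro h
    simpa using (TwoSidedIdeal.rel_iff _ _ _).mp (hle h)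
  · intro hx
    obtain ⟨r, hr⟩ := Ideal.mem_span_singleton'.mp hx
    exact RingConGen.Rel.of _ _ ⟨r, by rw [sub_zero, hr]⟩

/-- Normality of `ℏ` is what makes `{x | ℏ ^ k * x ∈ I}` a left ideal. -/
def Ideal.powColon (I : Ideal R)
    (hnormal : Set.range (fun r => ℏ * r) = Set.range (fun r => r * ℏ)) (k : ℕ) : Ideal R where
  carrier := {x | ℏ ^ k * x ∈ I}
  zero_mem' := by simp
  add_mem' {x y} hx hy := by simpa [mul_add] using I.add_mem hx hy
  smul_mem' r x hx := by
    obtain ⟨b, hb⟩ := exists_pow_mul_eq_mul_pow_of_range_eq hnormal k r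
    change ℏ ^ k * (r * x) ∈ I
    rw [← mul_assoc, hb, mul_assoc]
    exact I.mul_mem_left b hx

variable {hnormal : Set.range (fun r => ℏ * r) = Set.range (fun r => r * ℏ)}

@[simp]
theorem Ideal.mem_powColon {I : Ideal R} {k : ℕ} {x : R} :
    x ∈ I.powColon hnormal k ↔ ℏ ^ k * x ∈ I :=
  Iff.rfl

theorem Ideal.powColon_mono (I : Ideal R) : Monotone (I.powColon hnormal) := by
  intro m n hmn x hx
  rw [Ideal.mem_powColon, ← Nat.sub_add_cancel hmn, pow_add, mul_assoc]
  exact I.mul_mem_left _ hx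

end NormalElement

section Descent

variable {G R : Type*} [AddCommGroup G] [DecidableEq G] [Ring R] {𝒜 : G → AddSubgroup R}
  [GradedRing 𝒜] {ε : G} {ℏ : R}
  {hnormal : Set.range (fun r => ℏ * r) = Set.range (fun r => r * ℏ)}

theorem Ideal.IsHomogeneous.powColon {I : Ideal R} (hI : I.IsHomogeneous 𝒜) (hhom : ℏ ∈ 𝒜 ε)
    (k : ℕ) : (I.powColon hnormal k).IsHomogeneous 𝒜 := by
  intro γ x hx
  rw [Ideal.mem_powColon] at hx ⊢
  rw [← coe_decompose_mul_add_of_left_mem 𝒜 (pow_mem_graded k hhom)]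
  exact hI _ hx

theorem pow_mul_mem_of_powColon_le (hhom : ℏ ∈ 𝒜 ε)
    (hdiscrete : ∀ γ : G, ∃ n : ℕ, ∀ x : R, ℏ ^ n * x ∈ 𝒜 γ → ℏ ^ n * x = 0)
    {I K : Ideal R} (hK : K.IsHomogeneous 𝒜) (hKI : K ≤ I)
    (h : ∀ k, I.powColon hnormal k ≤ K.powColon hnormal k ⊔ Ideal.span {ℏ})
    (γ : G) (k : ℕ) {y : R} (hy : ℏ ^ k * y ∈ I) (hyγ : y ∈ 𝒜 (γ - k • ε)) :
    ℏ ^ k * y ∈ K := by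
  obtain ⟨M, hM⟩ := hdiscrete γ
  -- `ℏ ^ k * y` has degree `γ`, where `ℏ ^ M R` vanishes: induct on the distance from `k` to `M`.
  suffices ∀ j k y, M ≤ k + j → ℏ ^ k * y ∈ I → y ∈ 𝒜 (γ - k • ε) → ℏ ^ k * y ∈ K from
    this M k y (by omega) hy hyγ
  intro j
  induction j with
  | zero =>
    intro k y hk _ hyγ
    have hdeg : ℏ ^ k * y ∈ 𝒜 γ := by
      simpa using mul_mem_graded (pow_mem_graded k hhom) hyγ
    obtain ⟨i, rfl⟩ := Nat.exists_eq_add_of_le hk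
    rw [pow_add, mul_assoc] at hdeg ⊢
    rw [hM _ hdeg]
    exact K.zero_mem
  | succ j ih =>
    intro k y hk hy hyγ
    obtain ⟨z, hz, w, hw, hzw⟩ := Submodule.mem_sup.mp (h k hy)
    obtain ⟨a, rfl⟩ := Ideal.mem_span_singleton'.mp hw
    obtain ⟨b, hb⟩ := exists_mul_eq_mul_left_of_range_eq hnormal a
    obtain ⟨z', hz', t, ht, rfl⟩ :=
      (hK.powColon hhom k).exists_eq_add_mul hhom hyγ hz (by rw [← hzw, hb])
    have hzK : ℏ ^ k * z' ∈ K := hz'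
    have hsplit : ℏ ^ k * (z' + ℏ * t) = ℏ ^ k * z' + ℏ ^ (k + 1) * t := by
      rw [mul_add, pow_succ, mul_assoc]
    have htI : ℏ ^ (k + 1) * t ∈ I := by
      simpa [hsplit] using I.sub_mem hy (hKI hzK)
    have htγ : t ∈ 𝒜 (γ - (k + 1) • ε) := by
      rwa [succ_nsmul, ← sub_sub]
    rw [hsplit]
    exact K.add_mem hzK (ih (k + 1) t (by omega) htI htγ)

theorem Ideal.IsHomogeneous.le_of_powColon_le {I K : Ideal R} (hI : I.IsHomogeneous 𝒜)
    (hhom : ℏ ∈ 𝒜 ε) (hdiscrete : ∀ γ : G, ∃ n : ℕ, ∀ x : R, ℏ ^ n * x ∈ 𝒜 γ → ℏ ^ n * x = 0)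
    (hK : K.IsHomogeneous 𝒜) (hKI : K ≤ I)
    (h : ∀ k, I.powColon hnormal k ≤ K.powColon hnormal k ⊔ Ideal.span {ℏ}) : I ≤ K := by
  intro x hx
  classical
  rw [← sum_support_decompose 𝒜 x]
  refine K.sum_mem fun γ _ => ?_
  simpa using pow_mul_mem_of_powColon_le hhom hdiscrete hK hKI h γ 0
    (by simpa using hI γ hx) (by simp)

theorem Ideal.IsHomogeneous.fg_of_powColon_le {I : Ideal R} (hI : I.IsHomogeneous 𝒜)
    (hhom : ℏ ∈ 𝒜 ε) (hdiscrete : ∀ γ : G, ∃ n : ℕ, ∀ x : R, ℏ ^ n * x ∈ 𝒜 γ → ℏ ^ n * x = 0)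
    (N : ℕ) (T : ℕ → Set R) (hTfin : ∀ m, (T m).Finite)
    (hThom : ∀ m, ∀ t ∈ T m, IsHomogeneousElem 𝒜 t) (hTI : ∀ m, T m ⊆ I.powColon hnormal m)
    (hspan : ∀ k, I.powColon hnormal k ≤ Ideal.span (T (min k N)) ⊔ Ideal.span {ℏ}) :
    I.FG := by
  set E : Set R := ⋃ m ∈ Set.Iic N, (ℏ ^ m * ·) '' T m
  have hEI : Ideal.span E ≤ I :=
    Ideal.span_le.mpr <| Set.iUnion₂_subset fun m _ => Set.image_subset_iff.mpr (hTI m)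
  have hEhom : (Ideal.span E).IsHomogeneous 𝒜 := by
    refine Ideal.homogeneous_span 𝒜 E ?_
    simp only [E, Set.mem_iUnion]
    rintro _ ⟨m, -, t, ht, rfl⟩
    obtain ⟨i, hi⟩ := hThom m t ht
    exact ⟨m • ε + i, mul_mem_graded (pow_mem_graded m hhom) hi⟩
  have hTE : ∀ k, Ideal.span (T (min k N)) ≤ (Ideal.span E).powColon hnormal k := fun k =>
    Ideal.span_le.mpr fun t ht => Ideal.powColon_mono _ (min_le_left k N)
      (Ideal.subset_span (Set.mem_biUnion (min_le_right k N) ⟨t, ht, rfl⟩))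
  have hEfin : E.Finite := (Set.finite_Iic N).biUnion fun m _ => (hTfin m).image _
  refine ⟨hEfin.toFinset, ?_⟩
  rw [Set.Finite.coe_toFinset]
  exact le_antisymm hEI <| hI.le_of_powColon_le hhom hdiscrete hEhom hEI fun k =>
    (hspan k).trans (sup_le_sup_right (hTE k) _)

theorem IsLeftGradedNoetherian.of_map_of_ker_eq_span {S : Type*} [Ring S]
    {ℬ : G → AddSubgroup S} (hℬnoeth : IsLeftGradedNoetherian ℬ) (f : R →+* S)
    (hf : Function.Surjective f) (hker : RingHom.ker f = Ideal.span {ℏ})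
    (hℬ : ∀ γ, ℬ γ = (𝒜 γ).map f.toAddMonoidHom) (hhom : ℏ ∈ 𝒜 ε)
    (hnormal : Set.range (fun r => ℏ * r) = Set.range (fun r => r * ℏ))
    (hdiscrete : ∀ γ : G, ∃ n : ℕ, ∀ x : R, ℏ ^ n * x ∈ 𝒜 γ → ℏ ^ n * x = 0) :
    IsLeftGradedNoetherian 𝒜 := by
  intro I hI
  have hIH := (isHomogeneousLeftIdeal_iff_isHomogeneous I).mp hI
  have hL : ∀ k, IsHomogeneousLeftIdeal 𝒜 (I.powColon hnormal k) := fun k =>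
    (isHomogeneousLeftIdeal_iff_isHomogeneous _).mpr (hIH.powColon hhom k)
  obtain ⟨N, hN⟩ := hℬnoeth.exists_le_min (J := fun k => (I.powColon hnormal k).map f)
    (fun m n hmn => Ideal.map_mono (I.powColon_mono hmn)) fun k => (hL k).map f hℬ
  have hgen : ∀ m, ∃ T ⊆ {x | x ∈ I.powColon hnormal m ∧ ∃ γ, x ∈ 𝒜 γ},
      T.Finite ∧ (I.powColon hnormal m).map f = Ideal.span (f '' T) := by
    intro m
    rw [(hL m).map_eq_span f]
    exact Ideal.exists_finite_subset_span_image_eq f _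
      ((hL m).map_eq_span f ▸ hℬnoeth _ ((hL m).map f hℬ))
  choose T hTL hTfin hTspan using hgen
  refine hIH.fg_of_powColon_le hhom hdiscrete N T hTfin (fun m t ht => (hTL m ht).2)
    (fun m t ht => (hTL m ht).1) fun k y hy => ?_
  have hfy : f y ∈ Ideal.span (f '' T (min k N)) := hTspan _ ▸ hN k (Ideal.mem_map_of_mem f hy)
  rwa [← Ideal.map_span, ← Ideal.mem_comap, Ideal.comap_map_of_surjective f hf,
    ← RingHom.ker_eq_comap_bot, hker] at hfy

end Descent

theorem noetherian_iff_quotient_noetherian_general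
    {G R : Type} [AddCommGroup G] [DecidableEq G] [Ring R]
    (𝒜 : G → AddSubgroup R) [GradedRing 𝒜] (ε : G) (ℏ : R)
    (hhom : ℏ ∈ 𝒜 ε)
    (hnormal : Set.range (fun r => ℏ * r) = Set.range (fun r => r * ℏ))
    (hdiscrete : ∀ γ : G, ∃ n : ℕ, ∀ x : R, ℏ ^ n * x ∈ 𝒜 γ → ℏ ^ n * x = 0)
    -- the quotient ring `R̄ = R / ℏR` and its induced grading:
    (c : RingCon R) (hc : c = ringConGen (fun x y => ∃ r : R, x - y = r * ℏ))
    (𝒜bar : G → AddSubgroup c.Quotient)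
    (h𝒜bar : ∀ γ, 𝒜bar γ = (𝒜 γ).map (RingCon.mk' c).toAddMonoidHom) :
    IsLeftGradedNoetherian 𝒜 ↔ IsLeftGradedNoetherian 𝒜bar := by
  subst hc
  exact ⟨fun h => h.map _ h𝒜bar, fun h => h.of_map_of_ker_eq_span _ (RingCon.mk'_surjective _)
    (ker_mk'_ringConGen_of_range_eq hnormal) h𝒜bar hhom hnormal hdiscrete⟩

theorem noetherian_iff_quotient_noetherian
    {G R : Type} [AddCommGroup G] [DecidableEq G] [Ring R]
    (𝒜 : G → AddSubgroup R) [GradedRing 𝒜] (ε : G) (ℏ : R)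
    (hhom : ℏ ∈ 𝒜 ε)
    (hregl : ∀ a : R, ℏ * a = 0 → a = 0) (hregr : ∀ a : R, a * ℏ = 0 → a = 0)
    (hnormal : Set.range (fun r => ℏ * r) = Set.range (fun r => r * ℏ))
    (hnoninv : ¬ IsUnit ℏ)
    (hdiscrete : ∀ γ : G, ∃ n : ℕ, ∀ x : R, ℏ ^ n * x ∈ 𝒜 γ → ℏ ^ n * x = 0)
    -- the quotient ring `R̄ = R / ℏR` and its induced grading:
    (c : RingCon R) (hc : c = ringConGen (fun x y => ∃ r : R, x - y = r * ℏ))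
    (𝒜bar : G → AddSubgroup c.Quotient)
    (h𝒜bar : ∀ γ, 𝒜bar γ = (𝒜 γ).map (RingCon.mk' c).toAddMonoidHom) :
    IsLeftGradedNoetherian 𝒜 ↔ IsLeftGradedNoetherian 𝒜bar :=
  noetherian_iff_quotient_noetherian_general 𝒜 ε ℏ hhom hnormal hdiscrete c hc 𝒜bar h𝒜bar
end

section
/- Let R be a G-graded ring and ℏ a homogeneous regular normal non-invertible element such that R is ℏ-discrete (for every γ ∈ G there is n ≥ 0 with (ℏ^n R)_γ = 0). Then ℏ belongs to the graded Jacobson radical J^G(R), i.e., ℏ lies in every maximal homogeneous left ideal of R. -/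
/-!
If `R` is a `G`-graded ring and `ℏ` is a homogeneous regular normal non-invertible element
such that `R` is `ℏ`-discrete (for every `γ ∈ G` there is `n ≥ 0` with `(ℏ^n R)_γ = 0`),
then `ℏ` lies in every maximal homogeneous left ideal of `R`,
i.e. `ℏ` belongs to the graded Jacobson radical `J^G(R)`.
-/

/-- `J` is a maximal homogeneous left ideal: a proper homogeneous left ideal which is
maximal among proper homogeneous left ideals. -/
def IsMaximalHomogeneousLeftIdeal {G A σ : Type*} [AddCommGroup G] [DecidableEq G] [Ring A]
    [SetLike σ A] [AddSubgroupClass σ A] (𝒜 : G → σ) [GradedRing 𝒜] (J : Ideal A) : Prop :=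
  J.IsHomogeneous 𝒜 ∧ J ≠ ⊤ ∧ ∀ K : Ideal A, K.IsHomogeneous 𝒜 → J < K → K = ⊤

set_option maxHeartbeats 1000000 in
theorem hbar_mem_graded_jacobson {G R : Type} [AddCommGroup G] [DecidableEq G] [Ring R]
    (𝒜 : G → AddSubgroup R) [GradedRing 𝒜] (ε : G) (ℏ : R)
    (hhom : ℏ ∈ 𝒜 ε)
    (hregl : ∀ a : R, ℏ * a = 0 → a = 0) (hregr : ∀ a : R, a * ℏ = 0 → a = 0)
    (hnormal : Set.range (fun r => ℏ * r) = Set.range (fun r => r * ℏ))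
    (hnoninv : ¬ IsUnit ℏ)
    (hdiscrete : ∀ γ : G, ∃ n : ℕ, ∀ x : R, ℏ ^ n * x ∈ 𝒜 γ → ℏ ^ n * x = 0) :
    ∀ J : Ideal R, IsMaximalHomogeneousLeftIdeal 𝒜 J → ℏ ∈ J := by
  -- normality: every right multiple of ℏ is a left multiple
  have hnorm : ∀ r : R, ∃ s : R, r * ℏ = ℏ * s := by
    intro r
    have : r * ℏ ∈ Set.range (fun r => r * ℏ) := ⟨r, rfl⟩
    rw [← hnormal] at this
    obtain ⟨s, hs⟩ := this
    exact ⟨s, hs.symm⟩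
  -- powers of a right multiple of ℏ are left divisible by the same power of ℏ
  have hpow : ∀ (k : ℕ) (r : R), ∃ s : R, (r * ℏ) ^ k = ℏ ^ k * s := by
    intro k r
    induction k with
    | zero => exact ⟨1, by simp⟩
    | succ k ih =>
      obtain ⟨s, hs⟩ := ih
      obtain ⟨t, ht⟩ := hnorm (s * r)
      exact ⟨t, by rw [pow_succ, hs, mul_assoc, ← mul_assoc s r ℏ, ht,
        ← mul_assoc, ← pow_succ]⟩
  intro J hJ
  obtain ⟨hJhom, hJne, hJmax⟩ := hJ
  by_contra hnot
  -- the ideal J + Rℏ is homogeneous and strictly larger than J, hence equal to ⊤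
  have hspanhom : (Ideal.span {ℏ}).IsHomogeneous 𝒜 :=
    Ideal.homogeneous_span 𝒜 {ℏ} (by rintro x rfl; exact ⟨ε, hhom⟩)
  have hKhom : (J ⊔ Ideal.span {ℏ}).IsHomogeneous 𝒜 := hJhom.sup hspanhom
  have hmemK : ℏ ∈ J ⊔ Ideal.span {ℏ} :=
    Ideal.mem_sup_right (Ideal.subset_span rfl)
  have hlt : J < J ⊔ Ideal.span {ℏ} :=
    lt_of_le_of_ne le_sup_left (fun h => hnot (h ▸ hmemK))
  have htop : J ⊔ Ideal.span {ℏ} = ⊤ := hJmax _ hKhom hlt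
  have h1 : (1 : R) ∈ J ⊔ Ideal.span {ℏ} := htop ▸ Submodule.mem_top
  obtain ⟨j, hj, a, ha, hja⟩ := Submodule.mem_sup.mp h1
  -- take degree-0 components
  set j0 : R := (DirectSum.decompose 𝒜 j 0 : R) with hj0def
  set a0 : R := (DirectSum.decompose 𝒜 a 0 : R) with ha0def
  have hj0 : j0 ∈ J := hJhom 0 hj
  have ha0span : a0 ∈ Ideal.span {ℏ} := hspanhom 0 ha
  have ha0mem : a0 ∈ 𝒜 0 := (DirectSum.decompose 𝒜 a 0).2
  have hsum : j0 + a0 = 1 := by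
    have h := congrArg (fun x => ((DirectSum.decompose 𝒜 x) 0 : R)) hja
    simp only [DirectSum.decompose_add, DirectSum.add_apply, AddSubgroup.coe_add,
      DirectSum.decompose_of_mem_same 𝒜 SetLike.GradedOne.one_mem] at h
    exact h
  -- a0 = r * ℏ for some r
  obtain ⟨r, hr⟩ := Submodule.mem_span_singleton.mp ha0span
  rw [smul_eq_mul] at hr
  -- a0 is nilpotent by discreteness
  obtain ⟨n, hn⟩ := hdiscrete 0
  obtain ⟨s, hs⟩ := hpow n r
  have ha0pow : a0 ^ n ∈ 𝒜 0 := by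
    have := SetLike.pow_mem_graded n ha0mem
    simpa using this
  have ha0nil : IsNilpotent a0 := by
    refine ⟨n, ?_⟩
    rw [← hr, hs] at ha0pow ⊢
    exact hn s ha0pow
  have hunit : IsUnit j0 := by
    have : j0 = 1 - a0 := by rw [← hsum, add_sub_cancel_right]
    rw [this]
    exact ha0nil.isUnit_one_sub
  exact hJne (J.eq_top_of_isUnit_mem hj0 hunit)
end
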